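/- arXiv:2507.22503 — 2 statements merged into one kernel-verified Lean document; each statement's English description precedes it below -/
import Mathlib

section
/- Let p be an odd prime and n ≥ 5 with p not dividing n(n−1). Write n ≡ r (mod p) with 2 ≤ r < p, and let s ≥ 1 be the least index such that the s-th base-p digit of n is nonzero (such s exists since n ≥ p). Then the binomial coefficient C(n−1, p^s) is strictly greater than 1 and is not divisible by p. -/
lemma digit_eq_div_pow_mod (p : ℕ) (hp : 2 ≤ p) :
    ∀ (t n : ℕ), (Nat.digits p n).getD t 0 = n / p ^ t % p := by
  intro t
  induction t with
  | zero =>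
    intro n
    rcases Nat.eq_zero_or_pos n with rfl | hn
    · simp
    · rw [Nat.digits_def' (by omega : 1 < p) hn]
      simp
  | succ t ih =>
    intro n
    rcases Nat.eq_zero_or_pos n with rfl | hn
    · simp
    · rw [Nat.digits_def' (by omega : 1 < p) hn]
      simp only [List.getD_cons_succ]
      rw [ih (n / p), Nat.div_div_eq_div_mul, ← pow_succ']

theorem stmt_2 (p n r s : ℕ) (hp : p.Prime) (hodd : Odd p) (hn : 5 ≤ n)
    (hdvd : ¬ p ∣ n * (n - 1))
    (hr2 : 2 ≤ r) (hrp : r < p) (hmod : n % p = r)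
    (hs1 : 1 ≤ s) (hsne : (Nat.digits p n).getD s 0 ≠ 0)
    (hsmin : ∀ t : ℕ, 1 ≤ t → t < s → (Nat.digits p n).getD t 0 = 0) :
    1 < Nat.choose (n - 1) (p ^ s) ∧ ¬ p ∣ Nat.choose (n - 1) (p ^ s) := by
  haveI : Fact p.Prime := ⟨hp⟩
  have hp2 : 2 ≤ p := hp.two_le
  have hdig : ∀ t, (Nat.digits p n).getD t 0 = n / p ^ t % p :=
    fun t => digit_eq_div_pow_mod p hp2 t n
  have hpspos : 0 < p ^ s := pow_pos (by omega) s
  -- n % p ^ t = r for 1 ≤ t ≤ s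
  have hmodpow : ∀ t, 1 ≤ t → t ≤ s → n % p ^ t = r := by
    intro t h1 h2
    induction t with
    | zero => omega
    | succ t ih =>
      rcases Nat.eq_zero_or_pos t with rfl | ht
      · simpa using hmod
      · have ht' : n % p ^ t = r := ih ht (by omega)
        have hq : n % p ^ (t + 1) / p ^ t = 0 := by
          rw [pow_succ, Nat.mod_mul_right_div_self, ← hdig t, hsmin t ht (by omega)]
        have hr' : n % p ^ (t + 1) % p ^ t = r := by
          rw [Nat.mod_mod_of_dvd _ (pow_dvd_pow p (Nat.le_succ t)), ht']
        have hdm := Nat.div_add_mod (n % p ^ (t + 1)) (p ^ t)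
        rw [hq, hr', Nat.mul_zero, Nat.zero_add] at hdm
        omega
  have hnps : n % p ^ s = r := hmodpow s hs1 le_rfl
  have hdigs : n / p ^ s % p ≠ 0 := by rw [← hdig s]; exact hsne
  have hqpos : 1 ≤ n / p ^ s := by
    rcases Nat.eq_zero_or_pos (n / p ^ s) with h | h
    · simp [h] at hdigs
    · exact h
  have hps_le : p ^ s + r ≤ n := by
    have := Nat.div_add_mod n (p ^ s)
    have hle : p ^ s ≤ p ^ s * (n / p ^ s) := Nat.le_mul_of_pos_right _ hqpos
    omega
  -- quotients of n and n-1 by p^s agree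
  have hndvd : ¬ p ^ s ∣ n := by
    intro h
    have := Nat.mod_eq_zero_of_dvd h
    omega
  have hqeq : (n - 1) / p ^ s = n / p ^ s := by
    conv_rhs => rw [show n = n - 1 + 1 by omega]
    rw [Nat.succ_div_of_not_dvd (by rwa [show n - 1 + 1 = n by omega])]
  constructor
  · -- 1 < choose
    have h1 : p ^ s + 1 ≤ n - 1 := by omega
    calc 1 < p ^ s + 1 := by omega
      _ = (p ^ s + 1).choose (p ^ s) := (Nat.choose_succ_self_right _).symm
      _ ≤ (n - 1).choose (p ^ s) := Nat.choose_le_choose _ h1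
  · -- Lucas
    have hlucas := Choose.choose_modEq_choose_mul_prod_range_choose
      (n := n - 1) (k := p ^ s) (p := p) s
    have hprod : ∀ i ∈ Finset.range s,
        ((n - 1) / p ^ i % p).choose (p ^ s / p ^ i % p) = 1 := by
      intro i hi
      rw [Finset.mem_range] at hi
      have hdivpow : p ^ s / p ^ i = p ^ (s - i) :=
        Nat.pow_div (le_of_lt hi) (by omega)
      have hdvd' : p ∣ p ^ (s - i) := dvd_pow_self p (by omega)
      have hzero : p ^ s / p ^ i % p = 0 := by
        rw [hdivpow, Nat.mod_eq_zero_of_dvd hdvd']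
      rw [hzero, Nat.choose_zero_right]
    have hself : p ^ s / p ^ s = 1 := Nat.div_self hpspos
    rw [hself, hqeq, Finset.prod_congr rfl hprod] at hlucas
    simp only [Nat.choose_one_right, Finset.prod_const_one, Nat.cast_one, mul_one] at hlucas
    intro hdvdC
    have h0 : ((n - 1).choose (p ^ s) : ℤ) ≡ 0 [ZMOD p] :=
      Int.modEq_zero_iff_dvd.mpr (Int.natCast_dvd_natCast.mpr hdvdC)
    have h1 : (p : ℤ) ∣ ((n / p ^ s : ℕ) : ℤ) :=
      Int.modEq_zero_iff_dvd.mp (hlucas.symm.trans h0)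
    have h2 : p ∣ n / p ^ s := Int.natCast_dvd_natCast.mp h1
    exact hdigs (Nat.mod_eq_zero_of_dvd h2)
end

section
/- Let k be a field of characteristic 2, G a finite group, and V a finite-dimensional irreducible kG-module of dimension greater than 1 that is isomorphic to its dual module V*. Then the dimension of V over k is even. -/
/-!
An isomorphism `e : V ≃ V*` of representations is a nondegenerate invariant bilinear form `B`.
In characteristic `2` the form `B + Bᵀ` is alternating and invariant; its kernel is a
subrepresentation, so either it is nondegenerate or `B` is symmetric. For symmetric `B` the
isotropic vectors `{v | B v v = 0}` form a subrepresentation (the diagonal `v ↦ B v v` is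
additive in characteristic `2`): if it is `0` then `ρ g v - v` is always isotropic, so `ρ` is
trivial and `V` is a line; otherwise `B` itself is alternating. Either way `V` carries a
nondegenerate alternating form, and splitting off hyperbolic planes shows `dim V` is even.
-/

open Module Submodule

namespace LinearMap.BilinForm

section Field

variable {K V : Type*} [Field K] [AddCommGroup V] [Module K V] {B : LinearMap.BilinForm K V}

theorem IsAlt.eq_zero_of_apply_eq_zero (hB : B.IsAlt) {v w : V} (hvw : B v w ≠ 0) {a b : K}
    (hv : B (a • v + b • w) v = 0) (hw : B (a • v + b • w) w = 0) : a = 0 ∧ b = 0 := by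
  have hwv : B w v = -B v w := (hB.neg_eq v w).symm
  simp only [map_add, map_smul, LinearMap.add_apply, LinearMap.smul_apply, smul_eq_mul,
    hB.self_eq_zero, hwv, mul_zero, add_zero, zero_add, mul_neg, neg_eq_zero] at hv hw
  exact ⟨(mul_eq_zero.mp hw).resolve_right hvw, (mul_eq_zero.mp hv).resolve_right hvw⟩

theorem IsAlt.linearIndependent_pair (hB : B.IsAlt) {v w : V} (hvw : B v w ≠ 0) :
    LinearIndependent K ![v, w] :=
  LinearIndependent.pair_iff.mpr fun a b h ↦
    hB.eq_zero_of_apply_eq_zero hvw (by simp [h]) (by simp [h])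

theorem IsAlt.finrank_span_pair (hB : B.IsAlt) {v w : V} (hvw : B v w ≠ 0) :
    finrank K (span K {v, w}) = 2 := by
  have := finrank_span_eq_card (hB.linearIndependent_pair hvw)
  rwa [Matrix.range_cons_cons_empty, Fintype.card_fin] at this

theorem IsAlt.nondegenerate_restrict_span_pair (hB : B.IsAlt) {v w : V} (hvw : B v w ≠ 0) :
    (B.restrict (span K {v, w})).Nondegenerate := by
  refine B.nondegenerate_restrict_of_disjoint_orthogonal hB.isRefl ?_
  rw [disjoint_iff_inf_le]
  rintro x ⟨hx, hxo⟩
  obtain ⟨a, b, rfl⟩ := mem_span_pair.mp hx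
  have hv := hB.isRefl _ _ (hxo v (subset_span (by simp)))
  have hw := hB.isRefl _ _ (hxo w (subset_span (by simp)))
  obtain ⟨rfl, rfl⟩ := hB.eq_zero_of_apply_eq_zero hvw hv hw
  simp

variable [FiniteDimensional K V]

theorem Nondegenerate.restrict_orthogonal (hB : B.Nondegenerate) (hB₀ : B.IsRefl)
    {W : Submodule K V} (hW : (B.restrict W).Nondegenerate) :
    (B.restrict (B.orthogonal W)).Nondegenerate := by
  rw [restrict_nondegenerate_iff_isCompl_orthogonal hB₀, orthogonal_orthogonal hB hB₀]
  exact (isCompl_orthogonal_of_restrict_nondegenerate hB₀ hW).symm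

theorem IsAlt.even_finrank (hB : B.IsAlt) (hnd : B.Nondegenerate) : Even (finrank K V) := by
  induction h : finrank K V using Nat.strong_induction_on generalizing V B with
  | _ n ih =>
  rcases subsingleton_or_nontrivial V with hV | hV
  · simp [← h, finrank_zero_of_subsingleton]
  obtain ⟨v, hv⟩ := exists_ne (0 : V)
  obtain ⟨w, hvw⟩ : ∃ w, B v w ≠ 0 := by
    by_contra! hv₀
    exact hv (hnd.1 v hv₀)
  set P := span K {v, w}
  have hP := hB.nondegenerate_restrict_span_pair hvw
  have hdim : finrank K P + finrank K (B.orthogonal P) = n :=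
    h ▸ finrank_add_eq_of_isCompl (isCompl_orthogonal_of_restrict_nondegenerate hB.isRefl hP)
  rw [hB.finrank_span_pair hvw] at hdim
  obtain ⟨m, hm⟩ := ih _ (by omega) (B := B.restrict (B.orthogonal P)) (fun x ↦ hB x)
    (hnd.restrict_orthogonal hB.isRefl hP) rfl
  exact ⟨m + 1, by omega⟩

end Field

section CharTwo

variable {R M : Type*} [CommRing R] [CharP R 2] [AddCommGroup M] [Module R M]
  {B : LinearMap.BilinForm R M}

theorem isAlt_add_flip (B : LinearMap.BilinForm R M) : (B + B.flip).IsAlt :=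
  fun x ↦ CharTwo.add_self_eq_zero (B x x)

theorem isSymm_of_add_flip_eq_zero (h : B + B.flip = 0) : B.IsSymm :=
  ⟨fun x y ↦ CharTwo.add_eq_zero.mp (LinearMap.congr_fun₂ h x y)⟩

theorem IsSymm.apply_add_add_self (hB : B.IsSymm) (x y : M) :
    B (x + y) (x + y) = B x x + B y y := by
  simp only [map_add, LinearMap.add_apply, hB.eq y x]
  linear_combination (B x y) * CharTwo.two_eq_zero (R := R)

def IsSymm.isotropicSubmodule (hB : B.IsSymm) : Submodule R M where
  carrier := {x | B x x = 0}
  add_mem' {x y} (hx : B x x = 0) (hy : B y y = 0) :=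
    show B (x + y) (x + y) = 0 by rw [hB.apply_add_add_self, hx, hy, add_zero]
  zero_mem' := by simp
  smul_mem' c x hx := by simp_all

theorem IsSymm.mem_isotropicSubmodule (hB : B.IsSymm) {x : M} :
    x ∈ hB.isotropicSubmodule ↔ B x x = 0 := Iff.rfl

theorem IsSymm.isAlt_of_isotropicSubmodule_eq_top (hB : B.IsSymm)
    (h : hB.isotropicSubmodule = ⊤) : B.IsAlt :=
  fun _ ↦ hB.mem_isotropicSubmodule.mp (h ▸ mem_top)

end CharTwo

end LinearMap.BilinForm

namespace Representation

variable {k G V : Type*} [Group G] [AddCommGroup V]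

section CommRing

variable [CommRing k] [Module k V] (ρ : Representation k G V)

def IsInvariantForm (B : LinearMap.BilinForm k V) : Prop :=
  ∀ g v w, B (ρ g v) (ρ g w) = B v w

variable {ρ} {B C : LinearMap.BilinForm k V}

theorem isInvariantForm_of_intertwines_dual (f : V →ₗ[k] Dual k V)
    (hf : ∀ g v, f (ρ g v) = ρ.dual g (f v)) : ρ.IsInvariantForm f := by
  intro g v w
  rw [hf, dual_apply]
  exact congrArg (f v) (ρ.inv_self_apply g w)

theorem IsInvariantForm.add (hB : ρ.IsInvariantForm B) (hC : ρ.IsInvariantForm C) :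
    ρ.IsInvariantForm (B + C) := fun g v w ↦ by simp [hB g, hC g]

theorem IsInvariantForm.flip (hB : ρ.IsInvariantForm B) : ρ.IsInvariantForm B.flip :=
  fun g v w ↦ hB g w v

theorem IsInvariantForm.map_ker_le (hB : ρ.IsInvariantForm B) (g : G) :
    (LinearMap.ker B).map (ρ g) ≤ LinearMap.ker B := by
  rintro _ ⟨v, hv, rfl⟩
  ext w
  rw [SetLike.mem_coe, LinearMap.mem_ker] at hv
  rw [LinearMap.zero_apply, ← ρ.self_inv_apply g w, hB g, hv, LinearMap.zero_apply]

section CharTwo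

variable [CharP k 2]

theorem IsInvariantForm.map_isotropicSubmodule_le (hB : ρ.IsInvariantForm B) (hsymm : B.IsSymm)
    (g : G) : hsymm.isotropicSubmodule.map (ρ g) ≤ hsymm.isotropicSubmodule := by
  rintro _ ⟨v, hv, rfl⟩
  rwa [hsymm.mem_isotropicSubmodule, hB g]

theorem IsInvariantForm.apply_eq_self_of_isotropicSubmodule_eq_bot (hB : ρ.IsInvariantForm B)
    (hsymm : B.IsSymm) (h : hsymm.isotropicSubmodule = ⊥) (g : G) (v : V) : ρ g v = v := by
  have hmem : ρ g v - v ∈ hsymm.isotropicSubmodule := by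
    rw [hsymm.mem_isotropicSubmodule, sub_eq_add_neg, hsymm.apply_add_add_self, hB g]
    simp only [map_neg, LinearMap.neg_apply, neg_neg, CharTwo.add_self_eq_zero]
  rwa [h, mem_bot, sub_eq_zero] at hmem

end CharTwo

end CommRing

theorem finrank_le_one_of_forall_apply_eq_self [Field k] [Module k V] [FiniteDimensional k V]
    {ρ : Representation k G V}
    (hirr : ∀ W : Submodule k V, (∀ g : G, W.map (ρ g) ≤ W) → W = ⊥ ∨ W = ⊤)
    (htriv : ∀ g v, ρ g v = v) : finrank k V ≤ 1 := by
  rcases subsingleton_or_nontrivial V with hV | hV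
  · simp [finrank_zero_of_subsingleton]
  obtain ⟨v, hv⟩ := exists_ne (0 : V)
  have hinv (g : G) : (k ∙ v).map (ρ g) ≤ k ∙ v := by
    rintro _ ⟨u, hu, rfl⟩
    rwa [htriv]
  rcases hirr _ hinv with h | h
  · exact absurd h (span_singleton_eq_bot.not.mpr hv)
  · rw [← finrank_top, ← h, finrank_span_singleton hv]

end Representation

open LinearMap.BilinForm Representation in
theorem stmt_9_general (k : Type*) [Field k] [CharP k 2] (G : Type*) [Group G]
    (V : Type*) [AddCommGroup V] [Module k V] [FiniteDimensional k V]
    (ρ : Representation k G V)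
    (hirr : ∀ W : Submodule k V, (∀ g : G, W.map (ρ g) ≤ W) → W = ⊥ ∨ W = ⊤)
    (hdim : 1 < Module.finrank k V)
    (e : V ≃ₗ[k] Module.Dual k V)
    (he : ∀ (g : G) (v : V), e (ρ g v) = ρ.dual g (e v)) :
    Even (Module.finrank k V) := by
  set B : LinearMap.BilinForm k V := e.toLinearMap
  have hB : ρ.IsInvariantForm B := isInvariantForm_of_intertwines_dual e.toLinearMap he
  have hnd : B.Nondegenerate := nondegenerate_iff_ker_eq_bot.mpr e.ker
  rcases hirr _ (hB.add hB.flip).map_ker_le with hker | hker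
  · exact (isAlt_add_flip B).even_finrank (nondegenerate_iff_ker_eq_bot.mpr hker)
  have hsymm : B.IsSymm := isSymm_of_add_flip_eq_zero (LinearMap.ker_eq_top.mp hker)
  rcases hirr _ (hB.map_isotropicSubmodule_le hsymm) with hiso | hiso
  · have := finrank_le_one_of_forall_apply_eq_self hirr
      (hB.apply_eq_self_of_isotropicSubmodule_eq_bot hsymm hiso)
    omega
  · exact (hsymm.isAlt_of_isotropicSubmodule_eq_top hiso).even_finrank hnd

theorem stmt_9 (k : Type*) [Field k] [CharP k 2] (G : Type*) [Group G] [Finite G]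
    (V : Type*) [AddCommGroup V] [Module k V] [FiniteDimensional k V]
    (ρ : Representation k G V)
    (hirr : ∀ W : Submodule k V, (∀ g : G, W.map (ρ g) ≤ W) → W = ⊥ ∨ W = ⊤)
    (hdim : 1 < Module.finrank k V)
    (e : V ≃ₗ[k] Module.Dual k V)
    (he : ∀ (g : G) (v : V), e (ρ g v) = ρ.dual g (e v)) :
    Even (Module.finrank k V) :=
  stmt_9_general k G V ρ hirr hdim e he
end
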